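/- Let n ≥ 2 and k ≥ 1 be integers, and let s > 0. For every function f : ℝ → ℝ that is three times continuously differentiable on a neighborhood of s, one has the operator commutation identity (Γ_k (𝒟_k f))(s) = (𝒟_{k−1} (Γ_k f))(s). -/

import Mathlib

/-! Since `coth' = -1/sinh²`, the derivative of `Γ_k f` is again an operator of the shape of
`𝒟_k`, with different constants. Differentiating `𝒟_k f` and `(Γ_k f)'` once more, both sides
become explicit combinations of `f''', f'', f', f` with coefficients rational in `sinh s` and
`cosh s`, and these agree identically. -/

/-- The second-order operator `𝒟_k f (s) = f''(s) + (n-1)·coth(s)·f'(s)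
    - (k(k+n-2)/sinh²(s))·f(s)`. -/
noncomputable def Dop (n k : ℤ) (f : ℝ → ℝ) : ℝ → ℝ := fun s =>
  deriv (deriv f) s + ((n : ℝ) - 1) * (Real.cosh s / Real.sinh s) * deriv f s
    - ((k : ℝ) * ((k : ℝ) + (n : ℝ) - 2) / (Real.sinh s) ^ 2) * f s

/-- The first-order operator `Γ_k f (s) = f'(s) + (n+k-2)·coth(s)·f(s)`. -/
noncomputable def Gop (n k : ℤ) (f : ℝ → ℝ) : ℝ → ℝ := fun s =>
  deriv f s + ((n : ℝ) + (k : ℝ) - 2) * (Real.cosh s / Real.sinh s) * f s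

open Real Filter Topology

noncomputable def radialOp (p q : ℝ) (f : ℝ → ℝ) : ℝ → ℝ := fun t =>
  deriv (deriv f) t + p * (cosh t / sinh t) * deriv f t - q / sinh t ^ 2 * f t

lemma hasDerivAt_cosh_div_sinh {t : ℝ} (ht : t ≠ 0) :
    HasDerivAt (fun u => cosh u / sinh u) (-1 / sinh t ^ 2) t := by
  refine ((hasDerivAt_cosh t).div (hasDerivAt_sinh t) (sinh_ne_zero.2 ht)).congr_deriv ?_
  rw [← cosh_sq_sub_sinh_sq t]
  ring

lemma hasDerivAt_const_div_sinh_sq (a : ℝ) {t : ℝ} (ht : t ≠ 0) :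
    HasDerivAt (fun u => a / sinh u ^ 2) (-2 * a * cosh t / sinh t ^ 3) t := by
  have hsinh : sinh t ≠ 0 := sinh_ne_zero.2 ht
  refine ((hasDerivAt_const t a).div ((hasDerivAt_sinh t).pow 2)
    (pow_ne_zero 2 hsinh)).congr_deriv ?_
  simp only [Pi.pow_apply]
  field_simp
  ring

lemma hasDerivAt_radialOp (p q : ℝ) {f : ℝ → ℝ} {t : ℝ} (ht : t ≠ 0)
    (hf : DifferentiableAt ℝ f t) (hf' : DifferentiableAt ℝ (deriv f) t)
    (hf'' : DifferentiableAt ℝ (deriv (deriv f)) t) :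
    HasDerivAt (radialOp p q f)
      (deriv (deriv (deriv f)) t + p * (cosh t / sinh t * deriv (deriv f) t
        - deriv f t / sinh t ^ 2) - q * (deriv f t / sinh t ^ 2
        - 2 * cosh t * f t / sinh t ^ 3)) t := by
  refine ((hf''.hasDerivAt.add (((hasDerivAt_cosh_div_sinh ht).const_mul p).mul
    hf'.hasDerivAt)).sub ((hasDerivAt_const_div_sinh_sq q ht).mul hf.hasDerivAt)).congr_deriv ?_
  ring

lemma hasDerivAt_Gop (n k : ℤ) {f : ℝ → ℝ} {t : ℝ} (ht : t ≠ 0)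
    (hf : DifferentiableAt ℝ f t) (hf' : DifferentiableAt ℝ (deriv f) t) :
    HasDerivAt (Gop n k f) (radialOp (n + k - 2) (n + k - 2) f t) t := by
  refine (hf'.hasDerivAt.add (((hasDerivAt_cosh_div_sinh ht).const_mul
    ((n : ℝ) + k - 2)).mul hf.hasDerivAt)).congr_deriv ?_
  simp only [radialOp]
  ring

theorem stmt_0 (n k : ℤ) (s : ℝ) (hs : 0 < s)
    (f : ℝ → ℝ) (hf : ContDiffAt ℝ 3 f s) :
    Gop n k (Dop n k f) s = Dop n (k - 1) (Gop n k f) s := by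
  have hs0 : s ≠ 0 := hs.ne'
  have hf1 : ContDiffAt ℝ 2 (deriv f) s := hf.derivWithin (by norm_num)
  have hf2 : ContDiffAt ℝ 1 (deriv (deriv f)) s := hf1.derivWithin (by norm_num)
  have hGop' : deriv (Gop n k f) =ᶠ[𝓝 s] radialOp (n + k - 2) (n + k - 2) f := by
    filter_upwards [hf.eventually (by simp), eventually_ne_nhds hs0] with t ht ht0
    exact (hasDerivAt_Gop n k ht0 (ht.differentiableAt (by simp))
      ((ht.derivWithin (m := 2) (by norm_num)).differentiableAt (by simp))).deriv
  have hDop : Dop n k f = radialOp (n - 1) (k * (k + n - 2)) f := rfl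
  have hderiv_Gop := (hasDerivAt_Gop n k hs0 (hf.differentiableAt (by simp))
    (hf1.differentiableAt (by simp))).deriv
  have hderiv_radialOp (p q : ℝ) := (hasDerivAt_radialOp p q hs0
    (hf.differentiableAt (by simp)) (hf1.differentiableAt (by simp))
    (hf2.differentiableAt (by simp))).deriv
  rw [Gop, Dop.eq_1 n (k - 1), hGop'.deriv_eq, hderiv_Gop, hDop, hderiv_radialOp,
    hderiv_radialOp]
  simp only [radialOp, Gop]
  push_cast
  field_simp
  ring
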